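/- arXiv:1905.04352 — 2 statements merged into one kernel-verified Lean document; each statement's English description precedes it below -/
import Mathlib

section
/- Let k, k1, k2, k3 ∈ ℤ with k2 + k3 - k1 = k, |k2| ≥ |k3|, and suppose |k3| ≥ 2^{-20}|k| (the high-high region 𝕏_H) or 2^{-10}|k1| ≤ |k3| < 2^{-20}|k| (the semilinear region 𝕏_S). Then |k1|·(⟨k1⟩⟨k2⟩⟨k3⟩)^{-1/2} ≲ ⟨k⟩^{-1/2} with an absolute implicit constant. -/
/-!
Both regions give `⟨k1⟩⟨k⟩ ≲ ⟨k2⟩⟨k3⟩`: in `𝕏_H` because `⟨k⟩ ≲ ⟨k3⟩` and `⟨k1⟩ ≲ ⟨k2⟩`, in `𝕏_S`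
because `⟨k1⟩ ≲ ⟨k3⟩` and `⟨k⟩ ≲ ⟨k2⟩`, each time by `k2 + k3 - k1 = k` and `|k3| ≤ |k2|`.
Multiplying by `|k1|² ≤ ⟨k1⟩²` and taking square roots gives the claim.
-/

/-- The Japanese bracket `⟨k⟩ = √(1 + k²)` of an integer. -/
noncomputable def jb (k : ℤ) : ℝ := Real.sqrt (1 + (k : ℝ) ^ 2)

lemma jb_pos (k : ℤ) : 0 < jb k :=
  Real.sqrt_pos.mpr (by positivity)

lemma abs_le_jb (k : ℤ) : |(k : ℝ)| ≤ jb k := by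
  rw [← Real.sqrt_sq_eq_abs]
  exact Real.sqrt_le_sqrt (by linarith)

lemma jb_le_mul_of_abs_le {a b M : ℤ} (hM : 1 ≤ M) (h : |a| ≤ M * |b|) :
    jb a ≤ M * jb b := by
  have hMR : (1 : ℝ) ≤ M := by exact_mod_cast hM
  have hR : |(a : ℝ)| ≤ M * |(b : ℝ)| := by exact_mod_cast h
  have hsq : (a : ℝ) ^ 2 ≤ (M : ℝ) ^ 2 * (b : ℝ) ^ 2 := by
    rw [← sq_abs (a : ℝ), ← sq_abs (b : ℝ), ← mul_pow]
    exact pow_le_pow_left₀ (abs_nonneg _) hR 2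
  calc jb a ≤ Real.sqrt ((M : ℝ) ^ 2 * (1 + (b : ℝ) ^ 2)) :=
        Real.sqrt_le_sqrt (by nlinarith)
    _ = M * jb b := by
        rw [Real.sqrt_mul (by positivity), Real.sqrt_sq (by linarith), jb]

lemma abs_le_of_add_sub_eq {a b c d : ℤ} (h : b + c - a = d) (hcb : |c| ≤ |b|) :
    |a| ≤ 2 * |b| + |d| := by
  have := abs_add_three b c (-d)
  rw [abs_neg, show b + c + -d = a by omega] at this
  linarith

lemma jb_mul_jb_le_of_mem_region {k k1 k2 k3 : ℤ} (hsum : k2 + k3 - k1 = k) (h23 : |k3| ≤ |k2|)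
    (hreg : |k| ≤ 2 ^ 20 * |k3| ∨ (|k1| ≤ 2 ^ 10 * |k3| ∧ 2 ^ 20 * |k3| < |k|)) :
    jb k1 * jb k ≤ 2 ^ 42 * (jb k2 * jb k3) := by
  have h23pos : 0 ≤ jb k2 * jb k3 := (mul_pos (jb_pos k2) (jb_pos k3)).le
  rcases hreg with hH | ⟨hS, -⟩
  · have hk1 : |k1| ≤ 2 ^ 21 * |k2| := by
      linarith [abs_le_of_add_sub_eq hsum h23, abs_nonneg k2]
    have h1 : jb k1 ≤ 2 ^ 21 * jb k2 := by exact_mod_cast jb_le_mul_of_abs_le (by norm_num) hk1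
    have h2 : jb k ≤ 2 ^ 20 * jb k3 := by exact_mod_cast jb_le_mul_of_abs_le (by norm_num) hH
    calc jb k1 * jb k ≤ (2 ^ 21 * jb k2) * (2 ^ 20 * jb k3) :=
          mul_le_mul h1 h2 (jb_pos k).le (by linarith [jb_pos k2])
      _ ≤ 2 ^ 42 * (jb k2 * jb k3) := by nlinarith
  · have hk : |k| ≤ 2 ^ 11 * |k2| := by
      linarith [abs_le_of_add_sub_eq (show k2 + k3 - k = k1 by omega) h23, abs_nonneg k2]
    have h1 : jb k1 ≤ 2 ^ 10 * jb k3 := by exact_mod_cast jb_le_mul_of_abs_le (by norm_num) hS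
    have h2 : jb k ≤ 2 ^ 11 * jb k2 := by exact_mod_cast jb_le_mul_of_abs_le (by norm_num) hk
    calc jb k1 * jb k ≤ (2 ^ 10 * jb k3) * (2 ^ 11 * jb k2) :=
          mul_le_mul h1 h2 (jb_pos k).le (by linarith [jb_pos k3])
      _ ≤ 2 ^ 42 * (jb k2 * jb k3) := by nlinarith

lemma mul_rpow_neg_half_le_of_sq_mul_le {a P Q C : ℝ} (ha : 0 ≤ a) (hP : 0 < P) (hQ : 0 < Q)
    (hC : 0 ≤ C) (h : a ^ 2 * Q ≤ C ^ 2 * P) :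
    a * P ^ (-(1 / 2) : ℝ) ≤ C * Q ^ (-(1 / 2) : ℝ) := by
  have hsqrt := Real.sqrt_le_sqrt h
  rw [Real.sqrt_mul (sq_nonneg a), Real.sqrt_mul (sq_nonneg C), Real.sqrt_sq ha,
    Real.sqrt_sq hC] at hsqrt
  have hsP := Real.sqrt_pos.mpr hP
  have hsQ := Real.sqrt_pos.mpr hQ
  rw [Real.rpow_neg hP.le, Real.rpow_neg hQ.le, ← Real.sqrt_eq_rpow, ← Real.sqrt_eq_rpow,
    ← div_eq_mul_inv, ← div_eq_mul_inv, div_le_div_iff₀ hsP hsQ]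
  exact hsqrt

theorem stmt9 :
    ∃ C : ℝ, 0 < C ∧ ∀ k k1 k2 k3 : ℤ, k2 + k3 - k1 = k → |k3| ≤ |k2| →
      ((|k| ≤ 2 ^ 20 * |k3|) ∨ (|k1| ≤ 2 ^ 10 * |k3| ∧ 2 ^ 20 * |k3| < |k|)) →
      ((|k1| : ℤ) : ℝ) * (jb k1 * jb k2 * jb k3) ^ (-(1/2) : ℝ) ≤
        C * (jb k) ^ (-(1/2) : ℝ) := by
  refine ⟨2 ^ 21, by positivity, fun k k1 k2 k3 hsum h23 hreg => ?_⟩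
  have key := jb_mul_jb_le_of_mem_region hsum h23 hreg
  have h1 := jb_pos k1
  have h2 := jb_pos k2
  have h3 := jb_pos k3
  push_cast
  apply mul_rpow_neg_half_le_of_sq_mul_le (abs_nonneg _) (by positivity) (jb_pos k) (by positivity)
  calc |(k1 : ℝ)| ^ 2 * jb k ≤ jb k1 ^ 2 * jb k :=
      mul_le_mul_of_nonneg_right (pow_le_pow_left₀ (abs_nonneg _) (abs_le_jb k1) 2) (jb_pos k).le
    _ = jb k1 * (jb k1 * jb k) := by ring
    _ ≤ jb k1 * (2 ^ 42 * (jb k2 * jb k3)) := by gcongr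
    _ = (2 ^ 21) ^ 2 * (jb k1 * jb k2 * jb k3) := by ring
end

section
/- Let a, b, c be integers with a + b - c = ℓ (ℓ fixed) and a² + b² - c² = n (n fixed), with 2(b-c)(ℓ-b) = Δ ≠ 0. Fix ε > 0 and suppose |a| ≥ max(|b|,|c|)^{10} and |ℓ - b| ≥ |Δ|^ε. Then the number of solutions (a,b,c) with |b| ≤ N and |c| ≤ N is O_ε(N^ε). -/
/-!
Eliminating `a = ℓ - b + c` gives the factorisation `(ℓ - b) · 2(b - c) = ℓ² - n =: Δ`, and a
solution is determined by the factor `ℓ - b`. If `|Δ| ≤ 32 N³`, the solutions therefore inject into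
the divisors of `Δ`, and the divisor bound `τ(m) = O_δ(m^δ)` with `δ = ε / 3` gives `O_ε(N^ε)`.
If `|Δ| > 32 N³` there is at most one solution: two factorisations `d₁ k₁ = d₂ k₂ = Δ` with
`|d₁ - d₂| ≤ 2N` and distinct `|kᵢ| ≤ 4N` satisfy `d₁ d₂ (k₁ - k₂) = Δ (d₂ - d₁)`, whence
`|Δ|² = |d₁ d₂| |k₁ k₂| ≤ 32 N³ |Δ|`.
-/

open Finset

namespace Nat

variable {δ : ℝ}

lemma cast_add_one_le_rpow_pow_of_two_rpow_le (hδ : 0 < δ) {p : ℝ} (hp : 2 ^ δ⁻¹ ≤ p) (a : ℕ) :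
    (a + 1 : ℝ) ≤ (p ^ a) ^ δ := calc
  (a + 1 : ℝ) ≤ 2 ^ a := by exact_mod_cast Nat.lt_two_pow_self
  _ = ((2 ^ δ⁻¹) ^ δ) ^ a := by
    rw [← Real.rpow_mul zero_le_two, inv_mul_cancel₀ hδ.ne', Real.rpow_one]
  _ ≤ (p ^ δ) ^ a := by gcongr
  _ = (p ^ a) ^ δ := by
    rw [← Real.rpow_mul_natCast ((Real.rpow_nonneg zero_le_two _).trans hp), mul_comm,
      Real.rpow_natCast_mul ((Real.rpow_nonneg zero_le_two _).trans hp)]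

lemma cast_add_one_le_mul_rpow_pow (hδ : 0 < δ) {p : ℝ} (hp : 2 ≤ p) (a : ℕ) :
    (a + 1 : ℝ) ≤ (1 + (δ * Real.log 2)⁻¹) * (p ^ a) ^ δ := by
  set x := a * (δ * Real.log 2) with hx_def
  have hL : 0 < δ * Real.log 2 := mul_pos hδ (Real.log_pos one_lt_two)
  have hx : 0 ≤ x := by positivity
  have h2p : 1 + x ≤ (p ^ a) ^ δ := calc
    1 + x ≤ Real.exp x := by linarith [Real.add_one_le_exp x]
    _ = ((2 : ℝ) ^ a) ^ δ := by
      rw [← Real.rpow_natCast_mul zero_le_two, Real.rpow_def_of_pos two_pos, hx_def]; ring_nf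
    _ ≤ (p ^ a) ^ δ := by gcongr
  have ha : (a : ℝ) = x * (δ * Real.log 2)⁻¹ := by rw [hx_def]; field_simp
  calc (a + 1 : ℝ) ≤ (1 + (δ * Real.log 2)⁻¹) * (1 + x) := by
        rw [ha]; nlinarith [inv_pos.2 hL]
    _ ≤ _ := by gcongr

/-- In `τ(m) = ∏ (aₚ + 1)`, a prime `p ≥ 2 ^ δ⁻¹` contributes `aₚ + 1 ≤ p ^ (aₚ δ)`, and each of
the at most `B` smaller primes costs an extra factor `K`. -/
theorem exists_card_divisors_le_mul_rpow (hδ : 0 < δ) :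
    ∃ C : ℝ, 0 < C ∧ ∀ m : ℕ, m ≠ 0 → (#m.divisors : ℝ) ≤ C * (m : ℝ) ^ δ := by
  set K := 1 + (δ * Real.log 2)⁻¹
  have hK : 1 ≤ K := le_add_of_nonneg_right (by positivity)
  set B := ⌈(2 : ℝ) ^ δ⁻¹⌉₊
  refine ⟨K ^ B, by positivity, fun m hm => ?_⟩
  have hfactor : ∀ p ∈ m.primeFactors, ((m.factorization p + 1 : ℕ) : ℝ) ≤
      (if p ≤ B then K else 1) * ((p : ℝ) ^ m.factorization p) ^ δ := by
    intro p hp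
    have hp2 : (2 : ℝ) ≤ p := by exact_mod_cast (prime_of_mem_primeFactors hp).two_le
    push_cast
    split_ifs with hpB
    · exact cast_add_one_le_mul_rpow_pow hδ hp2 _
    · rw [one_mul]
      refine cast_add_one_le_rpow_pow_of_two_rpow_le hδ ?_ _
      exact (le_ceil _).trans (by exact_mod_cast (not_le.1 hpB).le)
  have hprod : ∏ p ∈ m.primeFactors, (if p ≤ B then K else 1) ≤ K ^ B := by
    rw [prod_ite, prod_const, prod_const_one, mul_one]
    refine pow_le_pow_right₀ hK ((card_le_card fun p hp => ?_).trans (card_Ioc 0 B).le)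
    simp only [mem_filter] at hp
    exact mem_Ioc.2 ⟨(prime_of_mem_primeFactors hp.1).pos, hp.2⟩
  have hmδ : (m : ℝ) ^ δ = ∏ p ∈ m.primeFactors, ((p : ℝ) ^ m.factorization p) ^ δ := by
    rw [Real.finsetProd_rpow _ _ (fun p _ => by positivity)]
    congr
    exact_mod_cast (prod_factorization_pow_eq_self hm).symm
  calc (#m.divisors : ℝ) = ∏ p ∈ m.primeFactors, ((m.factorization p + 1 : ℕ) : ℝ) := by
        rw [card_divisors hm]; push_cast; rfl
    _ ≤ ∏ p ∈ m.primeFactors, (if p ≤ B then K else 1) * ((p : ℝ) ^ m.factorization p) ^ δ :=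
        prod_le_prod (fun _ _ => by positivity) hfactor
    _ ≤ K ^ B * (m : ℝ) ^ δ := by
        rw [prod_mul_distrib, hmδ]; gcongr

end Nat

lemma Int.card_divisors (z : ℤ) : #z.divisors = 2 * #z.natAbs.divisors := by
  rw [Int.divisors, card_disjUnion, card_map, card_map, two_mul]

lemma Real.rpow_div_le_mul_rpow_of_le_mul_pow {x c N ε : ℝ} {k : ℕ} (hk : k ≠ 0) (hε : 0 ≤ ε)
    (hx : 0 ≤ x) (hc : 0 ≤ c) (hN : 0 ≤ N) (h : x ≤ c * N ^ k) :
    x ^ (ε / k) ≤ c ^ (ε / k) * N ^ ε := calc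
  x ^ (ε / k) ≤ (c * N ^ k) ^ (ε / k) := by gcongr
  _ = c ^ (ε / k) * N ^ ε := by
    rw [Real.mul_rpow hc (by positivity), ← Real.rpow_natCast_mul hN,
      mul_div_cancel₀ _ (Nat.cast_ne_zero.2 hk)]

lemma Int.abs_le_mul_sq_of_mul_eq_mul {m d₁ d₂ k₁ k₂ H K : ℤ} (h₁ : d₁ * k₁ = m)
    (h₂ : d₂ * k₂ = m) (hk : k₁ ≠ k₂) (hd : |d₁ - d₂| ≤ H) (hk₁ : |k₁| ≤ K) (hk₂ : |k₂| ≤ K) :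
    |m| ≤ H * K ^ 2 := by
  have hH : 0 ≤ H := (abs_nonneg _).trans hd
  have hK : 0 ≤ K := (abs_nonneg _).trans hk₁
  rcases eq_or_ne m 0 with rfl | hm
  · rw [abs_zero]; positivity
  have hdd : |d₁ * d₂| ≤ |m| * H := calc
    |d₁ * d₂| ≤ |d₁ * d₂| * |k₁ - k₂| := le_mul_of_one_le_right (abs_nonneg _)
        (Int.one_le_abs (sub_ne_zero.2 hk))
    _ = |m| * |d₂ - d₁| := by
        rw [← abs_mul, ← abs_mul]; congr 1; linear_combination d₂ * h₁ - d₁ * h₂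
    _ ≤ |m| * H := by rw [abs_sub_comm]; gcongr
  have hmm : |m| * |m| ≤ |m| * (H * K ^ 2) := calc
    |m| * |m| = |d₁ * d₂| * |k₁ * k₂| := by
        rw [← abs_mul, ← abs_mul]; congr 1; linear_combination -(d₂ * k₂) * h₁ - m * h₂
    _ ≤ (|m| * H) * (K * K) := by
        rw [abs_mul k₁]; gcongr
    _ = |m| * (H * K ^ 2) := by ring
  exact le_of_mul_le_mul_left hmm (abs_pos.2 hm)

def boundedSolutions (ℓ n N : ℤ) : Set (ℤ × ℤ × ℤ) :=
  {p | p.1 + p.2.1 - p.2.2 = ℓ ∧ p.1 ^ 2 + p.2.1 ^ 2 - p.2.2 ^ 2 = n ∧ |p.2.1| ≤ N ∧ |p.2.2| ≤ N}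

namespace boundedSolutions

variable {ℓ n N : ℤ} {p q : ℤ × ℤ × ℤ}

lemma sub_mul_eq (hp : p ∈ boundedSolutions ℓ n N) :
    (ℓ - p.2.1) * (2 * (p.2.1 - p.2.2)) = ℓ ^ 2 - n := by
  obtain ⟨h₁, h₂, -⟩ := hp
  rw [← h₁, ← h₂]; ring

lemma eq_of_snd_eq (hp : p ∈ boundedSolutions ℓ n N) (hq : q ∈ boundedSolutions ℓ n N)
    (h : p.2 = q.2) : p = q := by
  have := hp.1.trans hq.1.symm
  rw [h] at this
  exact Prod.ext (by omega) h

lemma injOn_sub (hΔ : ℓ ^ 2 - n ≠ 0) :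
    Set.InjOn (fun p => ℓ - p.2.1) (boundedSolutions ℓ n N) := by
  intro p hp q hq (h : ℓ - p.2.1 = ℓ - q.2.1)
  have hd : ℓ - p.2.1 ≠ 0 := left_ne_zero_of_mul (sub_mul_eq hp ▸ hΔ)
  have hk := mul_left_cancel₀ hd ((sub_mul_eq hp).trans (h ▸ (sub_mul_eq hq).symm))
  exact eq_of_snd_eq hp hq (Prod.ext (by omega) (by omega))

lemma mapsTo_divisors (hΔ : ℓ ^ 2 - n ≠ 0) :
    Set.MapsTo (fun p => ℓ - p.2.1) (boundedSolutions ℓ n N) (ℓ ^ 2 - n).divisors :=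
  fun _ hp => Int.mem_divisors.2 ⟨Dvd.intro _ (sub_mul_eq hp), hΔ⟩

lemma finite (hΔ : ℓ ^ 2 - n ≠ 0) : (boundedSolutions ℓ n N).Finite :=
  Set.Finite.of_injOn (mapsTo_divisors hΔ) (injOn_sub hΔ) (finite_toSet _)

lemma ncard_le_card_divisors (hΔ : ℓ ^ 2 - n ≠ 0) :
    (boundedSolutions ℓ n N).ncard ≤ #(ℓ ^ 2 - n).divisors := by
  rw [← Set.ncard_coe_finset]
  exact Set.ncard_le_ncard_of_injOn _ (mapsTo_divisors hΔ) (injOn_sub hΔ)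

lemma subsingleton (hΔ : 32 * N ^ 3 < |ℓ ^ 2 - n|) : (boundedSolutions ℓ n N).Subsingleton := by
  intro p hp q hq
  have hk : 2 * (p.2.1 - p.2.2) = 2 * (q.2.1 - q.2.2) := by
    by_contra hk
    obtain ⟨-, -, hb, hc⟩ := id hp
    obtain ⟨-, -, hb', hc'⟩ := id hq
    rw [abs_le] at hb hc hb' hc'
    have := Int.abs_le_mul_sq_of_mul_eq_mul (H := 2 * N) (K := 4 * N) (sub_mul_eq hp)
      (sub_mul_eq hq) hk (abs_le.2 ⟨by omega, by omega⟩) (abs_le.2 ⟨by omega, by omega⟩)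
      (abs_le.2 ⟨by omega, by omega⟩)
    linarith
  have hN : 0 ≤ N := (abs_nonneg _).trans hp.2.2.1
  have hΔ₀ : ℓ ^ 2 - n ≠ 0 := abs_pos.1 (lt_of_le_of_lt (by positivity) hΔ)
  have hk₀ : 2 * (p.2.1 - p.2.2) ≠ 0 := right_ne_zero_of_mul (sub_mul_eq hp ▸ hΔ₀)
  exact injOn_sub hΔ₀ hp hq
    (mul_right_cancel₀ hk₀ ((sub_mul_eq hp).trans (hk ▸ (sub_mul_eq hq).symm)))

end boundedSolutions

theorem stmt17 (ε : ℝ) (hε : 0 < ε) :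
    ∃ C : ℝ, 0 < C ∧ ∀ ℓ n : ℤ, ℓ ^ 2 - n ≠ 0 → ∀ N : ℤ, 1 ≤ N →
      (Set.ncard {p : ℤ × ℤ × ℤ |
        p.1 + p.2.1 - p.2.2 = ℓ ∧ p.1 ^ 2 + p.2.1 ^ 2 - p.2.2 ^ 2 = n ∧
        (max |p.2.1| |p.2.2|) ^ 10 ≤ |p.1| ∧
        ((|ℓ ^ 2 - n| : ℤ) : ℝ) ^ ε ≤ ((|ℓ - p.2.1| : ℤ) : ℝ) ∧
        |p.2.1| ≤ N ∧ |p.2.2| ≤ N} : ℝ) ≤ C * (N : ℝ) ^ ε := by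
  obtain ⟨C, hC, hτ⟩ := Nat.exists_card_divisors_le_mul_rpow (δ := ε / 3) (by positivity)
  refine ⟨2 * C * 32 ^ (ε / 3) + 1, by positivity, fun ℓ n hΔ N hN => ?_⟩
  have hNε : 1 ≤ (N : ℝ) ^ ε := Real.one_le_rpow (by exact_mod_cast hN) hε.le
  refine (Nat.cast_le.2 (Set.ncard_le_ncard (t := boundedSolutions ℓ n N)
    (fun p hp => ⟨hp.1, hp.2.1, hp.2.2.2.2⟩) (boundedSolutions.finite hΔ))).trans ?_
  rcases le_or_gt |ℓ ^ 2 - n| (32 * N ^ 3) with hsmall | hlarge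
  · have hsmall' : ((ℓ ^ 2 - n).natAbs : ℝ) ≤ 32 * (N : ℝ) ^ 3 := by
      rw [Nat.cast_natAbs]; exact_mod_cast hsmall
    calc ((boundedSolutions ℓ n N).ncard : ℝ) ≤ #(ℓ ^ 2 - n).divisors := by
          exact_mod_cast boundedSolutions.ncard_le_card_divisors hΔ
      _ = 2 * #(ℓ ^ 2 - n).natAbs.divisors := by rw [Int.card_divisors]; push_cast; rfl
      _ ≤ 2 * (C * ((ℓ ^ 2 - n).natAbs : ℝ) ^ (ε / 3)) := by
          gcongr; exact hτ _ (Int.natAbs_ne_zero.2 hΔ)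
      _ ≤ 2 * (C * (32 ^ (ε / 3) * (N : ℝ) ^ ε)) := by
          gcongr
          exact_mod_cast Real.rpow_div_le_mul_rpow_of_le_mul_pow three_ne_zero hε.le
            (Nat.cast_nonneg _) (by norm_num) (by positivity) hsmall'
      _ ≤ (2 * C * 32 ^ (ε / 3) + 1) * (N : ℝ) ^ ε := by linarith
  · calc ((boundedSolutions ℓ n N).ncard : ℝ) ≤ 1 := by
          have h := boundedSolutions.subsingleton hlarge
          exact_mod_cast (Set.ncard_le_one_iff h.finite).2 fun ha hb => h ha hb
      _ ≤ (2 * C * 32 ^ (ε / 3) + 1) * (N : ℝ) ^ ε := by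
          have : 0 ≤ 2 * C * 32 ^ (ε / 3) := by positivity
          nlinarith
end
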